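/- arXiv:1503.05413 — 2 statements merged into one kernel-verified Lean document; each statement's English description precedes it below -/
import Mathlib

section
/- Euler formula for timelike pure unit split quaternions (right matrix): let q = u₁i + u₂j + u₃k with -u₁² + u₂² + u₃² = -1. Then for every θ ∈ ℝ, exp(θ R_q) = cos θ · I₄ + sin θ · R_q. -/
/-!
`R` is the matrix of right multiplication, so `R` reverses products and `R_q ^ 2 = R_{q ^ 2}`.
For a pure split quaternion `q = u₁i + u₂j + u₃k` one has `q ^ 2 = -u₁² + u₂² + u₃²`, so in the
timelike case `R_q ^ 2 = -1`. An element `J` with `J ^ 2 = -1` of a normed `ℝ`-algebra determines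
the algebra map `ℂ → A`, `z ↦ re z + im z • J`, which is continuous and hence commutes with `exp`;
Euler's formula `exp (θ i) = cos θ + i sin θ` in `ℂ` is carried over to `A`.
-/

open Matrix Real

namespace SplitQuat

noncomputable def L (q : QuaternionAlgebra ℝ (-1) 0 1) : Matrix (Fin 4) (Fin 4) ℝ :=
  !![q.re, -q.imI, q.imJ, q.imK;
     q.imI, q.re, q.imK, -q.imJ;
     q.imJ, q.imK, q.re, -q.imI;
     q.imK, -q.imJ, q.imI, q.re]

noncomputable def R (q : QuaternionAlgebra ℝ (-1) 0 1) : Matrix (Fin 4) (Fin 4) ℝ :=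
  !![q.re, -q.imI, q.imJ, q.imK;
     q.imI, q.re, -q.imK, q.imJ;
     q.imJ, -q.imK, q.re, q.imI;
     q.imK, q.imJ, -q.imI, q.re]

theorem _root_.NormedSpace.exp_smul_of_mul_self_eq_neg_one {A : Type*} [NormedRing A]
    [NormedAlgebra ℝ A] [Algebra ℚ A] {J : A} (hJ : J * J = -1) (θ : ℝ) :
    NormedSpace.exp (θ • J) = Real.cos θ • (1 : A) + Real.sin θ • J := by
  let φ : ℂ →ₐ[ℝ] A := Complex.liftAux J hJ
  have hφ : Continuous φ := φ.toLinearMap.continuous_of_finiteDimensional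
  calc NormedSpace.exp (θ • J) = φ (NormedSpace.exp (θ * Complex.I)) := by
        rw [NormedSpace.map_exp φ hφ, Complex.liftAux_apply]
        simp
    _ = Real.cos θ • (1 : A) + Real.sin θ • J := by
        rw [← Complex.exp_eq_exp_ℂ, Complex.exp_mul_I, Complex.liftAux_apply]
        simp [Algebra.algebraMap_eq_smul_one, Complex.cos_ofReal_re, Complex.sin_ofReal_re]

theorem R_mul (p q : QuaternionAlgebra ℝ (-1) 0 1) : R (p * q) = R q * R p := by
  ext i j
  fin_cases i <;> fin_cases j <;> simp [R, Matrix.mul_apply, Fin.sum_univ_four] <;> ring_nf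

theorem R_coe (r : ℝ) : R (r : QuaternionAlgebra ℝ (-1) 0 1) = r • 1 := by
  ext i j
  fin_cases i <;> fin_cases j <;> simp [R]

theorem mk_zero_mul_self (u₁ u₂ u₃ : ℝ) :
    (⟨0, u₁, u₂, u₃⟩ * ⟨0, u₁, u₂, u₃⟩ : QuaternionAlgebra ℝ (-1) 0 1) =
      ((-u₁ ^ 2 + u₂ ^ 2 + u₃ ^ 2 : ℝ) : QuaternionAlgebra ℝ (-1) 0 1) := by
  ext <;>
    simp only [QuaternionAlgebra.mk_mul_mk, QuaternionAlgebra.re_coe, QuaternionAlgebra.imI_coe,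
      QuaternionAlgebra.imJ_coe, QuaternionAlgebra.imK_coe] <;>
    ring

attribute [local instance] Matrix.linftyOpNormedRing Matrix.linftyOpNormedAlgebra

theorem euler_R_timelike (u₁ u₂ u₃ : ℝ) (h : -u₁ ^ 2 + u₂ ^ 2 + u₃ ^ 2 = -1) (θ : ℝ) :
    NormedSpace.exp (θ • R ⟨0, u₁, u₂, u₃⟩) =
      Real.cos θ • (1 : Matrix (Fin 4) (Fin 4) ℝ) + Real.sin θ • R ⟨0, u₁, u₂, u₃⟩ := by
  refine NormedSpace.exp_smul_of_mul_self_eq_neg_one ?_ θ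
  rw [← R_mul, mk_zero_mul_self, h, R_coe, neg_one_smul]

end SplitQuat
end

section
/- De Moivre's formula for timelike split quaternions with spacelike vector part: let ε be a pure split quaternion with ε² = 1 (ε ≠ ±1), N > 0, and q = N(cosh θ + ε sinh θ). Then for every natural number n, qⁿ = Nⁿ(cosh(nθ) + ε sinh(nθ)) in the split quaternion algebra. -/
open Matrix Real

namespace SplitQuat

section Hyperbolic

variable {A : Type*} [Semiring A] [Algebra ℝ A] {ε : A}

theorem cosh_smul_one_add_sinh_smul_mul (hε : ε * ε = 1) (x y : ℝ) :
    (cosh x • (1 : A) + sinh x • ε) * (cosh y • 1 + sinh y • ε) =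
      cosh (x + y) • 1 + sinh (x + y) • ε := by
  simp only [add_mul, mul_add, smul_mul_smul_comm, hε, one_mul, mul_one, cosh_add, sinh_add,
    add_smul]
  rw [mul_comm (sinh x) (cosh y)]
  abel

theorem cosh_smul_one_add_sinh_smul_pow (hε : ε ^ 2 = 1) (θ : ℝ) (n : ℕ) :
    (cosh θ • (1 : A) + sinh θ • ε) ^ n = cosh (n * θ) • 1 + sinh (n * θ) • ε := by
  induction n with
  | zero => simp
  | succ n ih =>
    rw [pow_succ, ih, cosh_smul_one_add_sinh_smul_mul (sq ε ▸ hε), Nat.cast_succ, add_one_mul]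

end Hyperbolic

theorem deMoivre_quat_spacelike_general (ε : QuaternionAlgebra ℝ (-1) 0 1)
    (hε : ε ^ 2 = 1) (N θ : ℝ)
    (q : QuaternionAlgebra ℝ (-1) 0 1)
    (hq : q = N • (Real.cosh θ • (1 : QuaternionAlgebra ℝ (-1) 0 1) + Real.sinh θ • ε)) (n : ℕ) :
    q ^ n = N ^ n • (Real.cosh (n * θ) • (1 : QuaternionAlgebra ℝ (-1) 0 1) +
      Real.sinh (n * θ) • ε) := by
  rw [hq, smul_pow, cosh_smul_one_add_sinh_smul_pow hε]

theorem deMoivre_quat_spacelike (ε : QuaternionAlgebra ℝ (-1) 0 1) (hre : ε.re = 0)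
    (hε : ε ^ 2 = 1) (hε1 : ε ≠ 1) (hε2 : ε ≠ -1) (N θ : ℝ) (hN : 0 < N)
    (q : QuaternionAlgebra ℝ (-1) 0 1)
    (hq : q = N • (Real.cosh θ • (1 : QuaternionAlgebra ℝ (-1) 0 1) + Real.sinh θ • ε)) (n : ℕ) :
    q ^ n = N ^ n • (Real.cosh (n * θ) • (1 : QuaternionAlgebra ℝ (-1) 0 1) +
      Real.sinh (n * θ) • ε) :=
  deMoivre_quat_spacelike_general ε hε N θ q hq n

end SplitQuat
end
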